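/- Let π ∈ NC(k) with outer classes B_1, …, B_{o(π)}, listed in increasing order of minimal elements. Then the closures cl(B_1), …, cl(B_{o(π)}) are pairwise disjoint intervals of consecutive integers whose union is [k], and for every N ≥ 1 and every family x = (x_{i,j}), i ∈ [k], j ∈ [N], in a unital (not necessarily commutative) ring, Pr_π(x) = ∏_{i=1}^{o(π)} Pr_{π|cl(B_i)}(x|_{cl(B_i)}), the product taken in increasing order of i, where π|cl(B_i) is the restriction of π to cl(B_i). -/

import Mathlib

open scoped Classical

noncomputable section FreeStochasticMeasures

/-! ## Partitions of `Fin k` as setoids -/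

instance setoidFinFinite (k : ℕ) : Finite (Setoid (Fin k)) :=
  Finite.of_injective (fun π : Setoid (Fin k) => (π.r : Fin k → Fin k → Prop))
    (fun _ _ hab => Setoid.ext fun x y => iff_of_eq (congrFun (congrFun hab x) y))

instance setoidFinFintype (k : ℕ) : Fintype (Setoid (Fin k)) := Fintype.ofFinite _

/-- The classes of a partition of `Fin k`, as a finset of finsets. -/
def classesF {k : ℕ} (π : Setoid (Fin k)) : Finset (Finset (Fin k)) :=
  Finset.univ.image fun i => Finset.univ.filter fun j => π.r i j

/-- A partition `π` of `Fin k` is noncrossing: there are no `i < j < l < m` with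
`i ~π l`, `j ~π m` and `¬ i ~π j`. -/
def IsNC {k : ℕ} (π : Setoid (Fin k)) : Prop :=
  ∀ i j l m : Fin k, i < j → j < l → l < m → π.r i l → π.r j m → π.r i j

/-- `B` is a class of the partition `π`. -/
def IsClass {k : ℕ} (π : Setoid (Fin k)) (B : Finset (Fin k)) : Prop :=
  B ∈ classesF π

/-- `B` is an inner class of `π`: it is covered by some other class. -/
def IsInnerClass {k : ℕ} (π : Setoid (Fin k)) (B : Finset (Fin k)) : Prop :=
  IsClass π B ∧ ∃ B' : Finset (Fin k), IsClass π B' ∧ B' ≠ B ∧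
    ∃ a ∈ B', ∃ b ∈ B', ∀ c ∈ B, a < c ∧ c < b

/-- `B` is an outer class of `π`: a class which is not inner. -/
def IsOuterClass {k : ℕ} (π : Setoid (Fin k)) (B : Finset (Fin k)) : Prop :=
  IsClass π B ∧ ¬ IsInnerClass π B

/-- `Bf` enumerates the finsets satisfying `P` (e.g. the outer classes of a partition),
listed in increasing order of minimal elements. -/
def ClassEnum {k o : ℕ} (P : Finset (Fin k) → Prop) (Bf : Fin o → Finset (Fin k)) : Prop :=
  (∀ i, P (Bf i)) ∧ (∀ B, P B → ∃ i, Bf i = B) ∧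
    ∀ i j : Fin o, i < j → ∃ a ∈ Bf i, ∀ b ∈ Bf j, a < b

/-- The closure of a class: all indices lying between two of its elements. -/
def closureF {k : ℕ} (B : Finset (Fin k)) : Finset (Fin k) :=
  Finset.univ.filter fun j => ∃ a ∈ B, ∃ b ∈ B, a ≤ j ∧ j ≤ b

/-- Restriction of a partition of `Fin k` to a subset `C`, transported to `Fin C.card`
along the unique order isomorphism. -/
def restrictS {k : ℕ} (π : Setoid (Fin k)) (C : Finset (Fin k)) : Setoid (Fin C.card) :=
  Setoid.comap (fun i => (C.orderIsoOfFin rfl i).1) π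

/-- `μ` is the Möbius function of the poset `NC(k)` of noncrossing partitions of `Fin k`:
determined by `μ σ σ = 1` and the vanishing of the sums over intervals. -/
def IsNCMobius (k : ℕ) (μ : Setoid (Fin k) → Setoid (Fin k) → ℤ) : Prop :=
  (∀ σ : Setoid (Fin k), IsNC σ → μ σ σ = 1) ∧
    ∀ σ π : Setoid (Fin k), IsNC σ → IsNC π → σ < π →
      (∑ ρ ∈ Finset.univ.filter (fun ρ : Setoid (Fin k) => IsNC ρ ∧ σ ≤ ρ ∧ ρ ≤ π), μ σ ρ) = 0

/-- `μ` is the Möbius function of the lattice of all partitions of `Fin k`. -/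
def IsPMobius (k : ℕ) (μ : Setoid (Fin k) → Setoid (Fin k) → ℤ) : Prop :=
  (∀ σ : Setoid (Fin k), μ σ σ = 1) ∧
    ∀ σ π : Setoid (Fin k), σ < π →
      (∑ ρ ∈ Finset.univ.filter (fun ρ : Setoid (Fin k) => σ ≤ ρ ∧ ρ ≤ π), μ σ ρ) = 0

/-! ## Partition-indexed sums in a ring -/

section RingSums

variable {R : Type*} [Ring R]

/-- `St_π(x)`: sum over all `v` inducing exactly the partition `π`. -/
def StSumR {k N : ℕ} (x : Fin k → Fin N → R) (π : Setoid (Fin k)) : R :=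
  ∑ v ∈ Finset.univ.filter (fun v : Fin k → Fin N => ∀ i j, v i = v j ↔ π.r i j),
    (List.ofFn fun i => x i (v i)).prod

/-- `Pr_π(x)`: sum over all `v` constant on the classes of `π`. -/
def PrSumR {k N : ℕ} (x : Fin k → Fin N → R) (π : Setoid (Fin k)) : R :=
  ∑ v ∈ Finset.univ.filter (fun v : Fin k → Fin N => ∀ i j, π.r i j → v i = v j),
    (List.ofFn fun i => x i (v i)).prod

/-- Restriction of the family `x` to the rows indexed by `C`, in increasing order. -/
def restrictT {k N : ℕ} (x : Fin k → Fin N → R) (C : Finset (Fin k)) :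
    Fin C.card → Fin N → R := fun i => x (C.orderIsoOfFin rfl i).1

end RingSums

/-! ## C*-probability spaces, states, free independence -/

variable {A : Type*} [NormedRing A] [StarRing A] [CStarRing A] [NormedAlgebra ℂ A]
  [StarModule ℂ A] [CompleteSpace A]

/-- `φ` is a state: unital and positive. -/
structure IsCState (φ : A →ₗ[ℂ] ℂ) : Prop where
  map_one : φ 1 = 1
  pos : ∀ a : A, 0 ≤ (φ (star a * a)).re ∧ (φ (star a * a)).im = 0

/-- `φ` is a faithful tracial state. -/
structure IsFaithfulTracialState (φ : A →ₗ[ℂ] ℂ) : Prop where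
  map_one : φ 1 = 1
  pos : ∀ a : A, 0 ≤ (φ (star a * a)).re ∧ (φ (star a * a)).im = 0
  tracial : ∀ a b : A, φ (a * b) = φ (b * a)
  faithful : ∀ a : A, φ (star a * a) = 0 → a = 0

/-- Free independence of a family of subsets of `A` with respect to `φ`: alternating products
of centered elements of the generated unital star subalgebras are centered. -/
def FreelyIndependent (φ : A →ₗ[ℂ] ℂ) {ι : Type*} (S : ι → Set A) : Prop :=
  ∀ (m : ℕ) (idx : Fin (m + 1) → ι) (a : Fin (m + 1) → A),
    (∀ t, a t ∈ StarAlgebra.adjoin ℂ (S (idx t))) →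
    (∀ t : Fin m, idx t.castSucc ≠ idx t.succ) →
    (∀ t, φ (a t) = 0) →
    φ (List.ofFn a).prod = 0

/-- Free independence of two sets. -/
def FreelyIndependentPair (φ : A →ₗ[ℂ] ℂ) (S T : Set A) : Prop :=
  FreelyIndependent φ (fun b : Bool => cond b S T)

/-- A standard semicircular element. -/
def IsStdSemicircular (φ : A →ₗ[ℂ] ℂ) (s : A) : Prop :=
  star s = s ∧ (∀ m : ℕ, φ (s ^ (2 * m + 1)) = 0) ∧
    ∀ m : ℕ, φ (s ^ (2 * m)) = (catalan m : ℂ)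

/-! ## Moments and free cumulants -/

/-- The moment of the subfamily of `a` indexed by `B`, in increasing order. -/
def Mom {k : ℕ} (φ : A →ₗ[ℂ] ℂ) (a : Fin k → A) (B : Finset (Fin k)) : ℂ :=
  φ ((B.sort (· ≤ ·)).map a).prod

/-- `M_π(a)`: product of the moments over the classes of `π`. -/
def MomPi {k : ℕ} (φ : A →ₗ[ℂ] ℂ) (a : Fin k → A) (π : Setoid (Fin k)) : ℂ :=
  ∏ B ∈ classesF π, Mom φ a B

/-- `R_π(a)`: the free cumulant functional, via Möbius inversion over `NC(k)`
(`μ` is the Möbius function of `NC(k)`). -/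
def Rpi {k : ℕ} (φ : A →ₗ[ℂ] ℂ) (μ : Setoid (Fin k) → Setoid (Fin k) → ℤ)
    (a : Fin k → A) (π : Setoid (Fin k)) : ℂ :=
  ∑ σ ∈ Finset.univ.filter (fun σ : Setoid (Fin k) => IsNC σ ∧ σ ≤ π),
    (μ σ π : ℂ) * MomPi φ a σ

/-- `R(a_1, …, a_k)`: the free cumulant for the one-class partition. -/
def Rfull {k : ℕ} (φ : A →ₗ[ℂ] ℂ) (μ : Setoid (Fin k) → Setoid (Fin k) → ℤ)
    (a : Fin k → A) : ℂ :=
  Rpi φ μ a ⊤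

/-- The subfamily of operators indexed by `B`, in increasing order. -/
def subArgs {k : ℕ} (a : Fin k → A) (B : Finset (Fin k)) : Fin B.card → A :=
  fun i => a (B.orderIsoOfFin rfl i).1

/-! ## Half-open subintervals of `[0,1)` and subdivisions -/

/-- A half-open interval `[lo, hi) ⊆ [0,1)`. -/
structure HIv : Type where
  lo : ℝ
  hi : ℝ
  lo_nonneg : 0 ≤ lo
  lo_le_hi : lo ≤ hi
  hi_le_one : hi ≤ 1

namespace HIv

/-- The length of a half-open interval. -/
def len (I : HIv) : ℝ := I.hi - I.lo

/-- A half-open interval as a set of reals. -/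
def set (I : HIv) : Set ℝ := Set.Ico I.lo I.hi

end HIv

/-- The interval `[0,1)`. -/
def unitIv : HIv := ⟨0, 1, le_refl 0, zero_le_one, le_refl 1⟩

/-- A subdivision of the half-open interval `I` into finitely many half-open intervals,
listed in increasing order, recorded by its strictly increasing sequence of cut points. -/
structure SubdivOf (I : HIv) : Type where
  n : ℕ
  c : Fin (n + 1) → ℝ
  mono : StrictMono c
  first : c 0 = I.lo
  last : c (Fin.last n) = I.hi

namespace SubdivOf

/-- The `j`-th interval of a subdivision. -/
def piece {I : HIv} (S : SubdivOf I) (j : Fin S.n) : HIv where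
  lo := S.c j.castSucc
  hi := S.c j.succ
  lo_nonneg := by
    have h0 : S.c 0 ≤ S.c j.castSucc := S.mono.monotone (Fin.zero_le _)
    have h1 := I.lo_nonneg
    rw [S.first] at h0; linarith
  lo_le_hi := le_of_lt (S.mono Fin.castSucc_lt_succ)
  hi_le_one := by
    have h0 : S.c j.succ ≤ S.c (Fin.last S.n) := S.mono.monotone (Fin.le_last _)
    have h1 := I.hi_le_one
    rw [S.last] at h0; linarith

/-- The mesh of the subdivision is `< δ`: every piece has length `< δ`. -/
def MeshLT {I : HIv} (S : SubdivOf I) (δ : ℝ) : Prop :=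
  ∀ j : Fin S.n, (S.piece j).len < δ

end SubdivOf

/-- `L` is the operator-norm limit of `F` along the net of subdivisions of `I`
(as the mesh tends to `0`). -/
def IsSubdivLimit {I : HIv} (F : SubdivOf I → A) (L : A) : Prop :=
  ∀ ε : ℝ, 0 < ε → ∃ δ : ℝ, 0 < δ ∧ ∀ S : SubdivOf I, S.MeshLT δ → ‖F S - L‖ < ε

/-! ## Free stochastic measures -/

/-- A free stochastic measure on `(A, φ)`: a self-adjoint, uniformly bounded, additive,
stationary, continuous interval function with freely independent values on disjoint
intervals. -/
structure FSM (A : Type*) [NormedRing A] [StarRing A] [CStarRing A] [NormedAlgebra ℂ A]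
    [StarModule ℂ A] [CompleteSpace A] (φ : A →ₗ[ℂ] ℂ) : Type _ where
  val : HIv → A
  sa : ∀ I, star (val I) = val I
  bdd : ∃ C : ℝ, ∀ I, ‖val I‖ ≤ C
  add : ∀ I J K : HIv, I.hi = J.lo → K.lo = I.lo → K.hi = J.hi → val K = val I + val J
  free : ∀ {n : ℕ} (Iv : Fin n → HIv),
    (∀ i j, i ≠ j → Disjoint (Iv i).set (Iv j).set) →
    FreelyIndependent φ fun i => ({val (Iv i)} : Set A)
  stat : ∀ (m : ℕ) (I J : HIv), I.len = J.len → φ (val I ^ m) = φ (val J ^ m)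
  cont : ∀ (m : ℕ) (I : HIv) (ε : ℝ), 0 < ε → ∃ δ : ℝ, 0 < δ ∧
    ∀ J : HIv, |J.len - I.len| < δ → ‖φ (val J ^ m) - φ (val I ^ m)‖ < ε

/-- A `k`-tuple of free stochastic measures is consistent: joint free increments,
joint stationarity, and joint continuity. -/
def Consistent {k : ℕ} (φ : A →ₗ[ℂ] ℂ) (X : Fin k → FSM A φ) : Prop :=
  (∀ (n : ℕ) (u : Fin n → Fin k) (Iv : Fin n → HIv),
      (∀ i j, i ≠ j → Disjoint (Iv i).set (Iv j).set) →
      FreelyIndependent φ fun i => ({(X (u i)).val (Iv i)} : Set A)) ∧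
  (∀ (n : ℕ) (u : Fin n → Fin k) (I J : HIv), I.len = J.len →
      φ (List.ofFn fun i => (X (u i)).val I).prod
        = φ (List.ofFn fun i => (X (u i)).val J).prod) ∧
  (∀ (n : ℕ) (u : Fin n → Fin k) (I : HIv) (ε : ℝ), 0 < ε → ∃ δ : ℝ, 0 < δ ∧
      ∀ J : HIv, |J.len - I.len| < δ →
        ‖φ (List.ofFn fun i => (X (u i)).val J).prod
          - φ (List.ofFn fun i => (X (u i)).val I).prod‖ < ε)

/-! ## Riemann-type sums for stochastic measures -/

/-- `St_π(X, S)`: sum over multi-indices inducing exactly the partition `π`. -/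
def StSum {k : ℕ} (Xv : Fin k → HIv → A) (π : Setoid (Fin k)) {I : HIv}
    (S : SubdivOf I) : A :=
  ∑ v ∈ Finset.univ.filter (fun v : Fin k → Fin S.n => ∀ i j, v i = v j ↔ π.r i j),
    (List.ofFn fun i => Xv i (S.piece (v i))).prod

/-- `Pr_π(X, S)`: sum over multi-indices constant on the classes of `π`. -/
def PrSum {k : ℕ} (Xv : Fin k → HIv → A) (π : Setoid (Fin k)) {I : HIv}
    (S : SubdivOf I) : A :=
  ∑ v ∈ Finset.univ.filter (fun v : Fin k → Fin S.n => ∀ i j, π.r i j → v i = v j),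
    (List.ofFn fun i => Xv i (S.piece (v i))).prod

/-- The diagonal Riemann sum `Σ_j X^{(1)}(I_j) ⋯ X^{(k)}(I_j)`. -/
def diagSum {k : ℕ} (Xv : Fin k → HIv → A) {I : HIv} (S : SubdivOf I) : A :=
  ∑ j : Fin S.n, (List.ofFn fun i => Xv i (S.piece j)).prod

/-- The sub-tuple of interval functions indexed by `B`, in increasing order. -/
def subTupleV {k : ℕ} (Xv : Fin k → HIv → A) (B : Finset (Fin k)) :
    Fin B.card → HIv → A := fun i => Xv (B.orderIsoOfFin rfl i).1

/-- The alternating product `p Z_1 p Z_2 p ⋯ Z_k p`. -/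
def altProd {k : ℕ} (p : A) (Z : Fin k → A) : A :=
  p * (List.ofFn fun j => Z j * p).prod

/-- Lengths of the intersection `∩_{i ∈ G} I_i` of half-open intervals. -/
def interLen {n : ℕ} (Iv : Fin n → HIv) (G : Finset (Fin n)) : ℝ :=
  if h : G.Nonempty then
    max 0 ((G.inf' h fun i => (Iv i).hi) - (G.sup' h fun i => (Iv i).lo))
  else 0

/-- A free Poisson stochastic measure: all free cumulants of `Y(I)` equal `|I|`
(`μ` is a family of Möbius functions of the posets `NC(n)`). -/
def IsFreePoisson (φ : A →ₗ[ℂ] ℂ) (Y : FSM A φ)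
    (μ : (n : ℕ) → Setoid (Fin n) → Setoid (Fin n) → ℤ) : Prop :=
  ∀ n : ℕ, 1 ≤ n → ∀ I : HIv, Rfull φ (μ n) (fun _ : Fin n => Y.val I) = (I.len : ℂ)

end FreeStochasticMeasures

/-!
If an element of one class of a noncrossing partition lies in the closure of another class, the
noncrossing condition traps the whole first class strictly between two elements of the other, so
the first class is inner. Hence distinct outer classes have disjoint closures, and since every
class lies in the closure of some outer class, the closures of the outer classes are consecutive
intervals covering `[k]`, each a union of classes of `π`. For such a decomposition a map `v` is
constant on the classes of `π` iff its restriction to every block is, and the ordered product over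
`[k]` is the ordered product of the products over the blocks; distributing the sum over `v`
through this product gives the factorization.
-/

section Classes

variable {k o : ℕ} {π : Setoid (Fin k)} {B B' : Finset (Fin k)} {a b c x : Fin k}
  {Bf : Fin o → Finset (Fin k)} {i j : Fin o}

noncomputable def blockOf (π : Setoid (Fin k)) (a : Fin k) : Finset (Fin k) :=
  Finset.univ.filter fun j => π.r a j

@[simp]
lemma mem_blockOf : b ∈ blockOf π a ↔ π.r a b := by
  simp [blockOf]

lemma isClass_blockOf (π : Setoid (Fin k)) (a : Fin k) : IsClass π (blockOf π a) :=
  Finset.mem_image_of_mem _ (Finset.mem_univ a)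

lemma self_mem_blockOf (π : Setoid (Fin k)) (a : Fin k) : a ∈ blockOf π a :=
  mem_blockOf.2 (π.iseqv.refl a)

lemma IsClass.eq_blockOf (hB : IsClass π B) (ha : a ∈ B) : B = blockOf π a := by
  obtain ⟨i, -, rfl⟩ := Finset.mem_image.1 hB
  change blockOf π i = blockOf π a
  have hia : π.r i a := mem_blockOf.1 ha
  ext j
  simp only [mem_blockOf]
  exact ⟨π.iseqv.trans (π.iseqv.symm hia), π.iseqv.trans hia⟩

lemma IsClass.eq_of_mem (hB : IsClass π B) (hB' : IsClass π B') (ha : a ∈ B) (ha' : a ∈ B') :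
    B = B' := by
  rw [hB.eq_blockOf ha, hB'.eq_blockOf ha']

lemma IsClass.rel_of_mem (hB : IsClass π B) (ha : a ∈ B) (hb : b ∈ B) : π.r a b := by
  rw [hB.eq_blockOf ha] at hb
  exact mem_blockOf.1 hb

lemma IsClass.mem_of_rel (hB : IsClass π B) (ha : a ∈ B) (hab : π.r a b) : b ∈ B := by
  rw [hB.eq_blockOf ha]
  exact mem_blockOf.2 hab

lemma IsClass.nonempty (hB : IsClass π B) : B.Nonempty := by
  obtain ⟨i, -, rfl⟩ := Finset.mem_image.1 hB
  exact ⟨i, self_mem_blockOf π i⟩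

lemma mem_closureF : c ∈ closureF B ↔ ∃ a ∈ B, ∃ b ∈ B, a ≤ c ∧ c ≤ b := by
  simp [closureF]

lemma subset_closureF (B : Finset (Fin k)) : B ⊆ closureF B :=
  fun a ha => mem_closureF.2 ⟨a, ha, a, ha, le_rfl, le_rfl⟩

lemma closureF_eq_Icc (hB : B.Nonempty) : closureF B = Finset.Icc (B.min' hB) (B.max' hB) := by
  ext c
  rw [mem_closureF, Finset.mem_Icc]
  constructor
  · rintro ⟨a, ha, b, hb, hac, hcb⟩
    exact ⟨(B.min'_le a ha).trans hac, hcb.trans (B.le_max' b hb)⟩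
  · rintro ⟨hc₁, hc₂⟩
    exact ⟨_, B.min'_mem hB, _, B.max'_mem hB, hc₁, hc₂⟩

lemma closureF_ssubset_of_lt_of_lt (ha : a ∈ B') (hb : b ∈ B')
    (hB : ∀ c ∈ B, a < c ∧ c < b) : closureF B ⊂ closureF B' := by
  refine Finset.ssubset_iff_of_subset (fun c hc => ?_) |>.2 ⟨a, ?_, ?_⟩
  · obtain ⟨u, hu, w, hw, huc, hcw⟩ := mem_closureF.1 hc
    exact mem_closureF.2 ⟨a, ha, b, hb, (hB u hu).1.le.trans huc, hcw.trans (hB w hw).2.le⟩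
  · exact subset_closureF B' ha
  · intro haB
    obtain ⟨u, hu, -, -, hua, -⟩ := mem_closureF.1 haB
    exact (hB u hu).1.not_ge hua

/-- Take a class of maximal closure among those whose closure contains `B`. -/
lemma IsClass.exists_isOuterClass_subset_closureF (hB : IsClass π B) :
    ∃ O, IsOuterClass π O ∧ B ⊆ closureF O := by
  set S := (classesF π).filter fun O => B ⊆ closureF O
  obtain ⟨O, hOS, hOmax⟩ := S.exists_max_image (fun O => (closureF O).card)
    ⟨B, Finset.mem_filter.2 ⟨hB, subset_closureF B⟩⟩
  obtain ⟨hO, hBO⟩ := Finset.mem_filter.1 hOS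
  refine ⟨O, ⟨hO, ?_⟩, hBO⟩
  rintro ⟨-, O', hO', -, a, ha, b, hb, hcov⟩
  have hlt := closureF_ssubset_of_lt_of_lt ha hb hcov
  have hO'S : O' ∈ S := Finset.mem_filter.2 ⟨hO', hBO.trans hlt.subset⟩
  exact (Finset.card_lt_card hlt).not_ge (hOmax O' hO'S)

lemma IsNC.class_between_of_mem_between (hπ : IsNC π) (hB : IsClass π B) (hB' : IsClass π B')
    (hne : B ≠ B') (ha : a ∈ B) (hb : b ∈ B) (hx : x ∈ B') (hax : a < x) (hxb : x < b)
    (hc : c ∈ B') : a < c ∧ c < b := by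
  have hab := hB.rel_of_mem ha hb
  constructor
  · by_contra! hca
    have hca' : c < a := lt_of_le_of_ne hca fun h => hne (hB.eq_of_mem hB' ha (h ▸ hc))
    exact hne (hB.eq_of_mem hB' ha
      (hB'.mem_of_rel hc (hπ c a x b hca' hax hxb (hB'.rel_of_mem hc hx) hab)))
  · by_contra! hbc
    have hbc' : b < c := lt_of_le_of_ne hbc fun h => hne (hB.eq_of_mem hB' hb (h ▸ hc))
    exact hne (hB.eq_of_mem hB' (hB.mem_of_rel ha (hπ a x b c hax hxb hbc' hab
      (hB'.rel_of_mem hx hc))) hx)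

lemma IsNC.isInnerClass_of_mem_closureF (hπ : IsNC π) (hB : IsClass π B) (hB' : IsClass π B')
    (hne : B ≠ B') (hx : x ∈ B') (hxB : x ∈ closureF B) : IsInnerClass π B' := by
  obtain ⟨a, ha, b, hb, hax, hxb⟩ := mem_closureF.1 hxB
  have hax' : a < x := lt_of_le_of_ne hax fun h => hne (hB.eq_of_mem hB' ha (h ▸ hx))
  have hxb' : x < b := lt_of_le_of_ne hxb fun h => hne (hB.eq_of_mem hB' hb (h ▸ hx))
  exact ⟨hB', B, hB, hne, a, ha, b, hb,
    fun c hc => hπ.class_between_of_mem_between hB hB' hne ha hb hx hax' hxb' hc⟩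

lemma IsNC.disjoint_closureF (hπ : IsNC π) (hB : IsOuterClass π B) (hB' : IsOuterClass π B')
    (hne : B ≠ B') : Disjoint (closureF B) (closureF B') := by
  have hBne := hB.1.nonempty
  have hB'ne := hB'.1.nonempty
  rw [Finset.disjoint_left]
  intro c hc hc'
  rw [closureF_eq_Icc hBne, Finset.mem_Icc] at hc
  rw [closureF_eq_Icc hB'ne, Finset.mem_Icc] at hc'
  rcases le_total (B.min' hBne) (B'.min' hB'ne) with h | h
  · refine hB'.2 (hπ.isInnerClass_of_mem_closureF hB.1 hB'.1 hne (B'.min'_mem hB'ne) ?_)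
    rw [closureF_eq_Icc hBne, Finset.mem_Icc]
    exact ⟨h, hc'.1.trans hc.2⟩
  · refine hB.2 (hπ.isInnerClass_of_mem_closureF hB'.1 hB.1 hne.symm (B.min'_mem hBne) ?_)
    rw [closureF_eq_Icc hB'ne, Finset.mem_Icc]
    exact ⟨h, hc.1.trans hc'.2⟩

lemma ClassEnum.injective {P : Finset (Fin k) → Prop} (hBf : ClassEnum P Bf) :
    Function.Injective Bf := by
  intro i j hij
  by_contra hne
  rcases lt_or_gt_of_ne hne with h | h
  · obtain ⟨a, ha, hlt⟩ := hBf.2.2 i j h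
    exact lt_irrefl a (hlt a (hij ▸ ha))
  · obtain ⟨a, ha, hlt⟩ := hBf.2.2 j i h
    exact lt_irrefl a (hlt a (hij ▸ ha))

lemma ClassEnum.pairwise_disjoint_closureF (hπ : IsNC π) (hBf : ClassEnum (IsOuterClass π) Bf) :
    Pairwise fun i j => Disjoint (closureF (Bf i)) (closureF (Bf j)) :=
  fun i j hij => hπ.disjoint_closureF (hBf.1 i) (hBf.1 j) (hBf.injective.ne hij)

lemma ClassEnum.exists_subset_closureF (hBf : ClassEnum (IsOuterClass π) Bf)
    (hB : IsClass π B) : ∃ i, B ⊆ closureF (Bf i) := by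
  obtain ⟨O, hO, hBO⟩ := hB.exists_isOuterClass_subset_closureF
  obtain ⟨i, rfl⟩ := hBf.2.1 O hO
  exact ⟨i, hBO⟩

lemma ClassEnum.exists_mem_closureF (hBf : ClassEnum (IsOuterClass π) Bf) (a : Fin k) :
    ∃ i, a ∈ closureF (Bf i) :=
  (hBf.exists_subset_closureF (isClass_blockOf π a)).imp fun _ h => h (self_mem_blockOf π a)

lemma ClassEnum.mem_closureF_of_rel (hπ : IsNC π) (hBf : ClassEnum (IsOuterClass π) Bf)
    (ha : a ∈ closureF (Bf i)) (hab : π.r a b) : b ∈ closureF (Bf i) := by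
  obtain ⟨j, hj⟩ := hBf.exists_subset_closureF (isClass_blockOf π a)
  obtain rfl : i = j := by
    by_contra hij
    exact Finset.disjoint_left.1 (hBf.pairwise_disjoint_closureF hπ hij) ha
      (hj (self_mem_blockOf π a))
  exact hj (mem_blockOf.2 hab)

lemma ClassEnum.lt_of_mem_closureF (hπ : IsNC π) (hBf : ClassEnum (IsOuterClass π) Bf)
    (hij : i < j) (ha : a ∈ closureF (Bf i)) (hb : b ∈ closureF (Bf j)) : a < b := by
  obtain ⟨p, hp, hpj⟩ := hBf.2.2 i j hij
  obtain ⟨-, -, w, hw, -, haw⟩ := mem_closureF.1 ha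
  obtain ⟨q, hq, -, -, hqb, -⟩ := mem_closureF.1 hb
  by_contra! hba
  have hqi : q ∈ closureF (Bf i) :=
    mem_closureF.2 ⟨p, hp, w, hw, (hpj q hq).le, hqb.trans (hba.trans haw)⟩
  exact Finset.disjoint_left.1 (hBf.pairwise_disjoint_closureF hπ hij.ne) hqi
    (subset_closureF _ hq)

end Classes

lemma Fin.mem_iff_lt_card_of_isLowerSet {k : ℕ} {s : Finset (Fin k)}
    (hs : IsLowerSet (s : Set (Fin k))) (a : Fin k) : a ∈ s ↔ a.val < s.card := by
  constructor
  · intro ha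
    have hcard := Finset.card_le_card fun b hb => hs (Finset.mem_Iic.1 hb) ha
    rw [Fin.card_Iic] at hcard
    omega
  · intro ha
    by_contra hna
    have hcard := Finset.card_le_card fun b (hb : b ∈ s) =>
      Finset.mem_Iio.2 (lt_of_not_ge fun hab => hna (hs hab hb))
    rw [Fin.card_Iio] at hcard
    omega

section PrSum

variable {R : Type*} [Ring R] {N : ℕ}

lemma prSumR_append {m n : ℕ} (x : Fin (m + n) → Fin N → R) (π : Setoid (Fin (m + n)))
    (hπ : ∀ i j, ¬ π.r (Fin.castAdd n i) (Fin.natAdd m j)) :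
    PrSumR x π = PrSumR (fun i => x (Fin.castAdd n i)) (π.comap (Fin.castAdd n)) *
      PrSumR (fun j => x (Fin.natAdd m j)) (π.comap (Fin.natAdd m)) := by
  rw [PrSumR, PrSumR, PrSumR, Finset.sum_mul_sum, ← Finset.sum_product']
  refine (Finset.sum_equiv (Fin.appendEquiv m n) (fun p => ?_) (fun p _ => ?_)).symm
  · simp only [Finset.mem_product, Finset.mem_filter, Finset.mem_univ, true_and,
      Fin.appendEquiv_apply]
    constructor
    · rintro ⟨h₁, h₂⟩ a b hab
      induction a using Fin.addCases <;> induction b using Fin.addCases <;>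
        simp only [Fin.append_left, Fin.append_right]
      · exact h₁ _ _ hab
      · exact absurd hab (hπ _ _)
      · exact absurd (π.iseqv.symm hab) (hπ _ _)
      · exact h₂ _ _ hab
    · intro h
      exact ⟨fun i j hij => by simpa using h _ _ hij, fun i j hij => by simpa using h _ _ hij⟩
  · rw [List.ofFn_add, List.prod_append]
    congr 3 <;> funext i
    · exact congrArg (x _) (Fin.append_left p.1 p.2 i).symm
    · exact congrArg (x _) (Fin.append_right p.1 p.2 i).symm

lemma prSumR_comp_eq_of_range_eq {k c c' : ℕ} (x : Fin k → Fin N → R) (π : Setoid (Fin k))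
    {g : Fin c → Fin k} {g' : Fin c' → Fin k} (hg : StrictMono g) (hg' : StrictMono g')
    (h : Set.range g = Set.range g') :
    PrSumR (fun i => x (g i)) (π.comap g) = PrSumR (fun i => x (g' i)) (π.comap g') := by
  obtain rfl : c = c' := by
    have hcard := Nat.card_range_of_injective hg.injective
    rw [h, Nat.card_range_of_injective hg'.injective] at hcard
    simpa using hcard.symm
  obtain rfl := (hg.range_inj hg').1 h
  rfl

lemma prSumR_restrict_eq_comp {k c : ℕ} (x : Fin k → Fin N → R) (π : Setoid (Fin k))
    (C : Finset (Fin k)) {g : Fin c → Fin k} (hg : StrictMono g) (h : Set.range g = C) :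
    PrSumR (restrictT x C) (restrictS π C) = PrSumR (fun i => x (g i)) (π.comap g) :=
  prSumR_comp_eq_of_range_eq x π (C.orderEmbOfFin rfl).strictMono hg
    (by simp only [Finset.coe_orderIsoOfFin_apply]; rw [Finset.range_orderEmbOfFin, h])

lemma prSumR_restrict_comp {k m : ℕ} (x : Fin k → Fin N → R) (π : Setoid (Fin k))
    {f : Fin m → Fin k} (hf : StrictMono f) (C : Finset (Fin m)) :
    PrSumR (restrictT (fun i => x (f i)) C) (restrictS (π.comap f) C) =
      PrSumR (restrictT x (C.image f)) (restrictS π (C.image f)) :=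
  (prSumR_restrict_eq_comp x π _ (hf.comp (C.orderEmbOfFin rfl).strictMono)
    (by rw [Set.range_comp, Finset.range_orderEmbOfFin, Finset.coe_image])).symm

lemma prSumR_eq_mul_of_initial_block {d m : ℕ}
    (π : Setoid (Fin (d + m))) (C : Finset (Fin (d + m))) (x : Fin (d + m) → Fin N → R)
    (hC : ∀ a, a ∈ C ↔ a.val < d) (hsat : ∀ a b, a ∈ C → π.r a b → b ∈ C) :
    PrSumR x π = PrSumR (restrictT x C) (restrictS π C) *
      PrSumR (fun j => x (Fin.natAdd d j)) (π.comap (Fin.natAdd d)) := by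
  have hnat : ∀ j : Fin m, Fin.natAdd d j ∉ C := fun j h => by simpa using (hC _).1 h
  rw [prSumR_append x π fun i j hij => hnat j (hsat _ _ ((hC _).2 i.isLt) hij)]
  congr 1
  refine (prSumR_restrict_eq_comp x π C (Fin.strictMono_castAdd m) ?_).symm
  ext a
  exact ⟨by rintro ⟨i, rfl⟩; exact (hC _).2 i.isLt, fun ha => ⟨⟨a, (hC a).1 ha⟩, rfl⟩⟩

lemma prSumR_eq_prod_of_consecutive_blocks {o k : ℕ}
    (π : Setoid (Fin k)) (C : Fin o → Finset (Fin k)) (x : Fin k → Fin N → R)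
    (hord : ∀ i j, i < j → ∀ a ∈ C i, ∀ b ∈ C j, a < b) (hcover : ∀ a, ∃ i, a ∈ C i)
    (hsat : ∀ i a b, a ∈ C i → π.r a b → b ∈ C i) :
    PrSumR x π = (List.ofFn fun i => PrSumR (restrictT x (C i)) (restrictS π (C i))).prod := by
  induction o generalizing k with
  | zero =>
    cases k with
    | zero => simp [PrSumR]
    | succ k => exact (hcover 0).elim fun i _ => i.elim0
  | succ o ih =>
    have hlow : IsLowerSet (C 0 : Set (Fin k)) := by
      intro a b hba ha
      obtain ⟨i, hi⟩ := hcover b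
      rcases Fin.eq_zero_or_eq_succ i with rfl | ⟨j, rfl⟩
      · exact hi
      · exact absurd (hord 0 j.succ j.succ_pos a ha b hi) hba.not_gt
    have hC0 := Fin.mem_iff_lt_card_of_isLowerSet hlow
    have hd : (C 0).card ≤ k := by simpa using (C 0).card_le_univ
    -- Rewriting `k` as `d + m` makes `Fin.castAdd` and `Fin.natAdd` enumerate `C 0` and the rest.
    generalize (C 0).card = d at hC0 hd
    obtain ⟨m, rfl⟩ : ∃ m, k = d + m := ⟨k - d, by omega⟩
    set C' : Fin o → Finset (Fin m) := fun i =>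
      (C i.succ).preimage (Fin.natAdd d) (Fin.natAdd_injective m d).injOn
    have hC' : ∀ i, (C' i).image (Fin.natAdd d) = C i.succ := by
      intro i
      rw [Finset.image_preimage, Finset.filter_true_of_mem]
      intro b hb
      rw [Fin.range_natAdd]
      exact not_lt.1 fun hbd => lt_irrefl b (hord 0 i.succ i.succ_pos b ((hC0 b).2 hbd) b hb)
    rw [prSumR_eq_mul_of_initial_block π (C 0) x hC0 (hsat 0), List.ofFn_succ, List.prod_cons,
      ih (π.comap (Fin.natAdd d)) C' (fun a => x (Fin.natAdd d a))]
    · congr 1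
      refine congrArg List.prod (congrArg List.ofFn (funext fun i => ?_))
      rw [prSumR_restrict_comp x π (Fin.strictMono_natAdd d), hC']
    · intro i j hij a ha b hb
      rw [Finset.mem_preimage] at ha hb
      exact (Fin.strictMono_natAdd d).lt_iff_lt.1
        (hord _ _ (Fin.succ_lt_succ_iff.2 hij) _ ha _ hb)
    · intro a
      obtain ⟨i, hi⟩ := hcover (Fin.natAdd d a)
      rcases Fin.eq_zero_or_eq_succ i with rfl | ⟨j, rfl⟩
      · exact absurd ((hC0 _).1 hi) (by simp)
      · exact ⟨j, Finset.mem_preimage.2 hi⟩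
    · intro i a b ha hab
      exact Finset.mem_preimage.2 (hsat _ _ _ (Finset.mem_preimage.1 ha) hab)

end PrSum

theorem prsum_factorizes_over_outer_closures_general
    {R : Type*} [Ring R] (k o : ℕ)
    (π : Setoid (Fin k)) (hπ : IsNC π)
    (Bf : Fin o → Finset (Fin k)) (hBf : ClassEnum (IsOuterClass π) Bf) :
    (∀ i j : Fin o, i ≠ j → Disjoint (closureF (Bf i)) (closureF (Bf j))) ∧
    (∀ i : Fin o, ∃ lo hi : Fin k, closureF (Bf i) = Finset.Icc lo hi) ∧
    (Finset.univ.biUnion fun i => closureF (Bf i)) = Finset.univ ∧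
    (∀ (N : ℕ), 1 ≤ N → ∀ x : Fin k → Fin N → R,
      PrSumR x π = (List.ofFn fun i : Fin o =>
        PrSumR (restrictT x (closureF (Bf i))) (restrictS π (closureF (Bf i)))).prod) := by
  refine ⟨hBf.pairwise_disjoint_closureF hπ, fun i => ?_, ?_, fun N _ x => ?_⟩
  · exact ⟨_, _, closureF_eq_Icc (hBf.1 i).1.nonempty⟩
  · refine Finset.eq_univ_of_forall fun a => Finset.mem_biUnion.2 ?_
    exact (hBf.exists_mem_closureF a).imp fun i h => ⟨Finset.mem_univ i, h⟩
  · exact prSumR_eq_prod_of_consecutive_blocks π _ x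
      (fun _ _ hij _ ha _ hb => hBf.lt_of_mem_closureF hπ hij ha hb) hBf.exists_mem_closureF
      (fun _ _ _ ha hab => hBf.mem_closureF_of_rel hπ ha hab)

/-- For `π ∈ NC(k)` with outer classes `B_1, …, B_o` (in increasing order of minimal
elements), the closures `cl(B_i)` are pairwise disjoint intervals of consecutive integers
whose union is `[k]`, and `Pr_π(x) = ∏_i Pr_{π|cl(B_i)}(x|_{cl(B_i)})`. -/
theorem prsum_factorizes_over_outer_closures
    {R : Type*} [Ring R] (k o : ℕ) (hk : 1 ≤ k)
    (π : Setoid (Fin k)) (hπ : IsNC π)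
    (Bf : Fin o → Finset (Fin k)) (hBf : ClassEnum (IsOuterClass π) Bf) :
    (∀ i j : Fin o, i ≠ j → Disjoint (closureF (Bf i)) (closureF (Bf j))) ∧
    (∀ i : Fin o, ∃ lo hi : Fin k, closureF (Bf i) = Finset.Icc lo hi) ∧
    (Finset.univ.biUnion fun i => closureF (Bf i)) = Finset.univ ∧
    (∀ (N : ℕ), 1 ≤ N → ∀ x : Fin k → Fin N → R,
      PrSumR x π = (List.ofFn fun i : Fin o =>
        PrSumR (restrictT x (closureF (Bf i))) (restrictS π (closureF (Bf i)))).prod) :=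
  prsum_factorizes_over_outer_closures_general k o π hπ Bf hBf
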